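/- arXiv:2109.06867 — 4 statements merged into one kernel-verified Lean document; each statement's English description precedes it below -/
import Mathlib

section
/- For all positive integers K and L and every real p with 0 ≤ p ≤ 1, the sum Σ_{α=1}^{K} [ C(K, min(α+L-1,K)) · C(min(α+L-1,K)-1, α-1) / C(K-α, min(α+L-1,K)-α) ] · p^{α-1} (1-p)^{K-α+1} equals T_C(K, L, p) = Σ_{α=1}^{K} C(K, α) p^{α-1} (1-p)^{K-α+1} · α / min(α+L-1, K). (Corollary 1: the coding delay achieved by the decentralized multi-transmitter delivery algorithm in the infinite file-size limit equals the stated closed form.) -/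
/-!
The two sums agree term by term. With `m = min (α + L - 1) K`, which lies in `[α, K]` because
`L ≥ 1`, absorption `m * C(m-1, α-1) = α * C(m, α)` and the subset-of-a-subset identity
`C(K, m) * C(m, α) = C(K, α) * C(K-α, m-α)` turn the left coefficient into `C(K, α) * α / m`.
-/

open Finset

/-- Coding delay of the decentralized multi-transmitter coded caching scheme
(infinite file-size limit): `K` users, `L` transmitters, caching ratio `p`. -/
noncomputable def codingDelay (K L : ℕ) (p : ℝ) : ℝ :=
  ∑ α ∈ Finset.Icc 1 K,
    (K.choose α : ℝ) * p ^ (α - 1) * (1 - p) ^ (K - α + 1) *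
      (α : ℝ) / (min (α + L - 1) K : ℝ)

theorem Nat.choose_mul_choose_sub_one_mul {K m a : ℕ} (ha : 0 < a) (ham : a ≤ m) :
    K.choose m * (m - 1).choose (a - 1) * m = K.choose a * (K - a).choose (m - a) * a := by
  obtain ⟨a, rfl⟩ : ∃ b, a = b + 1 := ⟨a - 1, by omega⟩
  obtain ⟨m, rfl⟩ : ∃ n, m = n + 1 := ⟨m - 1, by omega⟩
  simp only [Nat.add_sub_cancel]
  calc K.choose (m + 1) * m.choose a * (m + 1)
      = K.choose (m + 1) * ((m + 1) * m.choose a) := by ring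
    _ = K.choose (m + 1) * (m + 1).choose (a + 1) * (a + 1) := by
      rw [Nat.add_one_mul_choose_eq, mul_assoc]
    _ = K.choose (a + 1) * (K - (a + 1)).choose (m + 1 - (a + 1)) * (a + 1) := by
      rw [Nat.choose_mul ham]

theorem choose_mul_choose_sub_one_div_choose {𝕜 : Type*} [Field 𝕜] [CharZero 𝕜] {K m a : ℕ}
    (ha : 0 < a) (ham : a ≤ m) (hmK : m ≤ K) :
    (K.choose m : 𝕜) * ((m - 1).choose (a - 1) : 𝕜) / ((K - a).choose (m - a) : 𝕜) =
      (K.choose a : 𝕜) * a / m := by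
  have hchoose : ((K - a).choose (m - a) : 𝕜) ≠ 0 := by
    exact_mod_cast (Nat.choose_pos (by omega : m - a ≤ K - a)).ne'
  have hm : (m : 𝕜) ≠ 0 := by exact_mod_cast (ha.trans_le ham).ne'
  rw [div_eq_div_iff hchoose hm]
  exact_mod_cast (Nat.choose_mul_choose_sub_one_mul ha ham).trans (by ring)

theorem algorithm_delay_eq_closed_form_general (K L : ℕ) (hL : 0 < L)
    (p : ℝ) :
    (∑ α ∈ Finset.Icc 1 K,
        ((K.choose (min (α + L - 1) K) : ℝ) *
            ((min (α + L - 1) K - 1).choose (α - 1) : ℝ) /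
            ((K - α).choose (min (α + L - 1) K - α) : ℝ)) *
          p ^ (α - 1) * (1 - p) ^ (K - α + 1))
      = codingDelay K L p := by
  refine sum_congr rfl fun α hα => ?_
  obtain ⟨hα, hαK⟩ := mem_Icc.mp hα
  have hmin : ((min (α + L - 1) K : ℕ) : ℝ) = min ((α : ℝ) + L - 1) K := by
    rw [Nat.cast_min, Nat.cast_sub (by omega), Nat.cast_add, Nat.cast_one]
  rw [choose_mul_choose_sub_one_div_choose hα (le_min (by omega) hαK) (min_le_right _ _), hmin]
  ring

theorem algorithm_delay_eq_closed_form (K L : ℕ) (hK : 0 < K) (hL : 0 < L)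
    (p : ℝ) (hp0 : 0 ≤ p) (hp1 : p ≤ 1) :
    (∑ α ∈ Finset.Icc 1 K,
        ((K.choose (min (α + L - 1) K) : ℝ) *
            ((min (α + L - 1) K - 1).choose (α - 1) : ℝ) /
            ((K - α).choose (min (α + L - 1) K - α) : ℝ)) *
          p ^ (α - 1) * (1 - p) ^ (K - α + 1))
      = codingDelay K L p :=
  algorithm_delay_eq_closed_form_general K L hL p
end

section
/- For all positive integers K and L and every real p with 0 ≤ p ≤ 1, T_C(K, L, p) ≥ T_C(K, 1, p) - ΔT_C(K, L, p), where ΔT_C(K, L, p) = (L-1) · Σ_{α=1}^{K} C(K, α) p^{α-1} (1-p)^{K-α+1} / (α + L - 1). (Lower bound on the coding delay showing the multiplexing-gain reduction due to deploying multiple transmitters.) -/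
open Finset

/-- Coding delay reduction factor due to deploying multiple transmitters. -/
noncomputable def deltaDelay (K L : ℕ) (p : ℝ) : ℝ :=
  (L - 1 : ℝ) * ∑ α ∈ Finset.Icc 1 K,
    (K.choose α : ℝ) * p ^ (α - 1) * (1 - p) ^ (K - α + 1) / (α + L - 1 : ℝ)

theorem delay_lower_bound (K L : ℕ) (hK : 0 < K) (hL : 0 < L)
    (p : ℝ) (hp0 : 0 ≤ p) (hp1 : p ≤ 1) :
    codingDelay K L p ≥ codingDelay K 1 p - deltaDelay K L p := by
  unfold codingDelay deltaDelay
  rw [ge_iff_le, Finset.mul_sum, ← Finset.sum_sub_distrib]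
  apply Finset.sum_le_sum
  intro α hα
  simp only [Finset.mem_Icc] at hα
  obtain ⟨h1, h2⟩ := hα
  have hp1' : (0:ℝ) ≤ 1 - p := by linarith
  set c : ℝ := (K.choose α : ℝ) * p ^ (α - 1) * (1 - p) ^ (K - α + 1) with hc
  have hc0 : 0 ≤ c := by positivity
  have hα0 : (1:ℝ) ≤ α := by exact_mod_cast h1
  have hαK : (α:ℝ) ≤ K := by exact_mod_cast h2
  have hL1 : (1:ℝ) ≤ L := by exact_mod_cast hL
  have hK1 : (1:ℝ) ≤ K := by exact_mod_cast hK
  have e1 : min ((α:ℝ) + (1:ℕ) - 1) (K:ℝ) = (α:ℝ) := by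
    push_cast
    rw [show (α:ℝ) + 1 - 1 = (α:ℝ) by ring, min_eq_left hαK]
  rw [e1]
  have hd0 : (0:ℝ) < (α : ℝ) + L - 1 := by linarith
  have hm0 : (0:ℝ) < min ((α:ℝ) + L - 1) K := lt_min hd0 (by linarith)
  have hm2 : min ((α:ℝ) + L - 1) K ≤ (α:ℝ) + L - 1 := min_le_left _ _
  have key : c * α / ((α : ℝ) + L - 1) ≤ c * α / min ((α:ℝ) + L - 1) K := by
    gcongr
  have eq1 : c * α / α - ((L : ℝ) - 1) * (c / ((α : ℝ) + L - 1)) =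
      c * α / ((α : ℝ) + L - 1) := by
    field_simp
    ring
  linarith
end

section
/- Let K_c and K_d be positive integers, K = K_c + K_d, and let h(p) = K_c(1-p)/(1+K_c p) + ((1-p)/p)(1 - (1-p)^{K_d}) for p ∈ (0,1). Then lim_{p→0⁺} h(p) = K and lim_{p→0⁺} (h(p) - K)/p = -(K_c² + K + C(K_d, 2)). (First-order Taylor approximation of the hybrid TDMA coded caching delay with a single transmitter in the low-memory regime: T_Hybrid ≈ K - (M/N)(K_c² + K + C(K_d,2)).) -/
/-!
For `p ≠ 0` the geometric sum turns `((1 - p) / p) * (1 - (1 - p) ^ Kd)` into the polynomial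
`∑ j < Kd, (1 - p) ^ (j + 1)`, so on `p > 0` the delay `h` agrees with a function `g` that is
differentiable at `0`. Both limits are then `g 0 = Kc + Kd` and the derivative
`g' 0 = -(Kc + Kc ^ 2) - ∑ j < Kd, (j + 1) = -(Kc ^ 2 + K + C(Kd, 2))`.
-/

open Filter Topology Finset

lemma sum_range_add_one_eq_add_choose_two {R : Type*} [Semiring R] (n : ℕ) :
    ∑ j ∈ range n, ((j : R) + 1) = n + n.choose 2 := by
  have gauss : ∑ j ∈ range n, j = n.choose 2 := by rw [sum_range_id, Nat.choose_two_right]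
  rw [sum_add_distrib, ← Nat.cast_sum, gauss, sum_const, card_range, nsmul_one, add_comm]

lemma one_sub_div_mul_one_sub_pow {K : Type*} [Field K] {p : K} (hp : p ≠ 0) (n : ℕ) :
    (1 - p) / p * (1 - (1 - p) ^ n) = ∑ j ∈ range n, (1 - p) ^ (j + 1) := by
  rw [← mul_neg_geom_sum, sub_sub_cancel, ← mul_assoc, div_mul_cancel₀ _ hp, mul_sum]
  exact sum_congr rfl fun j _ => (pow_succ' _ _).symm

lemma hasDerivAt_sum_one_sub_pow_succ (n : ℕ) :
    HasDerivAt (fun p : ℝ => ∑ j ∈ range n, (1 - p) ^ (j + 1)) (-(n + n.choose 2)) 0 := by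
  have hterm (j : ℕ) : HasDerivAt (fun p : ℝ => (1 - p) ^ (j + 1)) (-((j : ℝ) + 1)) 0 := by
    simpa using ((hasDerivAt_id' (0 : ℝ)).const_sub 1).fun_pow (j + 1)
  refine (HasDerivAt.fun_sum fun j (_ : j ∈ range n) => hterm j).congr_deriv ?_
  rw [sum_neg_distrib, sum_range_add_one_eq_add_choose_two]

lemma hasDerivAt_mul_one_sub_div_one_add_mul (c : ℝ) :
    HasDerivAt (fun p : ℝ => c * (1 - p) / (1 + c * p)) (-(c + c ^ 2)) 0 := by
  have num : HasDerivAt (fun p : ℝ => c * (1 - p)) (-c) 0 := by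
    simpa using ((hasDerivAt_id' (0 : ℝ)).const_sub 1).const_mul c
  have den : HasDerivAt (fun p : ℝ => 1 + c * p) c 0 := by
    simpa using ((hasDerivAt_id' (0 : ℝ)).const_mul c).const_add 1
  refine (num.div den (by simp)).congr_deriv ?_
  simp only [mul_zero, add_zero, mul_one, sub_zero, one_pow, div_one]
  ring

lemma tendsto_and_tendsto_slope_of_eventuallyEq {f g : ℝ → ℝ} {g' : ℝ}
    (hfg : f =ᶠ[𝓝[>] 0] g) (hg : HasDerivAt g g' 0) :
    Tendsto f (𝓝[>] 0) (𝓝 (g 0)) ∧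
      Tendsto (fun p => (f p - g 0) / p) (𝓝[>] 0) (𝓝 g') := by
  refine ⟨(hg.continuousAt.tendsto.mono_left nhdsWithin_le_nhds).congr' hfg.symm, ?_⟩
  refine hg.tendsto_slope_zero_right.congr' ?_
  filter_upwards [hfg] with p hp
  rw [zero_add, hp, smul_eq_mul, inv_mul_eq_div]

theorem hybrid_delay_taylor_general (Kc Kd : ℕ)
    (K : ℕ) (hK : K = Kc + Kd)
    (h : ℝ → ℝ)
    (hh : ∀ p : ℝ, h p =
        Kc * (1 - p) / (1 + Kc * p) + ((1 - p) / p) * (1 - (1 - p) ^ Kd)) :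
    Tendsto h (nhdsWithin 0 (Set.Ioi 0)) (nhds (K : ℝ)) ∧
      Tendsto (fun p : ℝ => (h p - K) / p) (nhdsWithin 0 (Set.Ioi 0))
        (nhds (-((Kc : ℝ) ^ 2 + K + (Kd.choose 2 : ℝ)))) := by
  set g : ℝ → ℝ := fun p =>
    Kc * (1 - p) / (1 + Kc * p) + ∑ j ∈ range Kd, (1 - p) ^ (j + 1)
  have hhg : h =ᶠ[𝓝[>] 0] g := by
    filter_upwards [self_mem_nhdsWithin] with p hp
    rw [hh, one_sub_div_mul_one_sub_pow hp.ne']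
  have hg0 : g 0 = K := by simp [g, hK]
  have hg' : HasDerivAt g (-((Kc : ℝ) ^ 2 + K + (Kd.choose 2 : ℝ))) 0 := by
    refine ((hasDerivAt_mul_one_sub_div_one_add_mul Kc).add
      (hasDerivAt_sum_one_sub_pow_succ Kd)).congr_deriv ?_
    rw [hK]; push_cast; ring
  simpa only [hg0] using tendsto_and_tendsto_slope_of_eventuallyEq hhg hg'

theorem hybrid_delay_taylor (Kc Kd : ℕ) (hKc : 0 < Kc) (hKd : 0 < Kd)
    (K : ℕ) (hK : K = Kc + Kd)
    (h : ℝ → ℝ)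
    (hh : ∀ p : ℝ, h p =
        Kc * (1 - p) / (1 + Kc * p) + ((1 - p) / p) * (1 - (1 - p) ^ Kd)) :
    Tendsto h (nhdsWithin 0 (Set.Ioi 0)) (nhds (K : ℝ)) ∧
      Tendsto (fun p : ℝ => (h p - K) / p) (nhdsWithin 0 (Set.Ioi 0))
        (nhds (-((Kc : ℝ) ^ 2 + K + (Kd.choose 2 : ℝ)))) :=
  hybrid_delay_taylor_general Kc Kd K hK h hh
end

section
/- For all positive integers K_c and K_d with K = K_c + K_d, the inequality K_c² + C(K_d, 2) > C(K, 2) holds if and only if K_c + 1 > 2·K_d. (Characterization of when the first-order (low-memory) delay coefficient of the hybrid scheme exceeds that of the fully decentralized scheme, i.e., when the hybrid TDMA strategy outperforms the fully decentralized strategy to first order in M/N.) -/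
theorem hybrid_beats_decentralized_iff (Kc Kd : ℕ) (hKc : 0 < Kc) (hKd : 0 < Kd) :
    Kc ^ 2 + Kd.choose 2 > (Kc + Kd).choose 2 ↔ Kc + 1 > 2 * Kd := by
  obtain ⟨c, rfl⟩ : ∃ c, Kc = c + 1 := ⟨Kc - 1, by omega⟩
  obtain ⟨d, rfl⟩ : ∃ d, Kd = d + 1 := ⟨Kd - 1, by omega⟩
  have h1 : (d + 1).choose 2 = (d + 1) * d / 2 := by
    rw [Nat.choose_two_right]; simp
  have h2 : (c + 1 + (d + 1)).choose 2 = (c + d + 2) * (c + d + 1) / 2 := by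
    rw [show c + 1 + (d + 1) = c + d + 2 by omega, Nat.choose_two_right]
    simp
  have p1 : 2 ∣ (d + 1) * d := by
    rw [Nat.mul_comm]; exact (Nat.even_mul_succ_self d).two_dvd
  have p2 : 2 ∣ (c + d + 2) * (c + d + 1) := by
    rw [show (c + d + 2) * (c + d + 1) = (c + d + 1) * (c + d + 2) from Nat.mul_comm _ _]
    exact (Nat.even_mul_succ_self _).two_dvd
  have key : 2 * (c + 1) ^ 2 + (d + 1) * d > (c + d + 2) * (c + d + 1) ↔ c + 2 > 2 * (d + 1) := by
    constructor
    · intro h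
      by_contra hc
      push_neg at hc
      nlinarith
    · intro h
      nlinarith
  rw [h1, h2]
  omega
end
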